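/- For the cycle graph C_n on n ≥ 3 vertices, the harmonic index of its total graph satisfies H(T(C_n)) = n. -/

import Mathlib

open scoped Classical

/-- The total graph `T(G)` of a simple graph `G`: its vertex set is `V(G) ∪ E(G)`,
and two vertices of `T(G)` are adjacent iff the corresponding elements of `G`
are adjacent vertices, adjacent (distinct, sharing an endpoint) edges, or an
incident vertex–edge pair. -/
def SimpleGraph.totalGraph {V : Type*} (G : SimpleGraph V) :
    SimpleGraph (V ⊕ G.edgeSet) where
  Adj x y :=
    match x, y with
    | Sum.inl u, Sum.inl v => G.Adj u v
    | Sum.inl u, Sum.inr e => u ∈ (e : Sym2 V)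
    | Sum.inr e, Sum.inl u => u ∈ (e : Sym2 V)
    | Sum.inr e, Sum.inr f => e ≠ f ∧ ∃ v, v ∈ (e : Sym2 V) ∧ v ∈ (f : Sym2 V)
  symm := by
    refine ⟨?_⟩
    rintro (u | e) (v | f) h
    · exact h.symm
    · exact h
    · exact h
    · exact ⟨h.1.symm, h.2.imp fun v hv => ⟨hv.2, hv.1⟩⟩
  loopless := by
    refine ⟨?_⟩
    rintro (u | e) h
    · exact G.loopless.irrefl u h
    · exact h.1 rfl

/-- The harmonic index `H(G) = ∑_{uv ∈ E(G)} 2 / (deg u + deg v)`. -/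
noncomputable def SimpleGraph.harmonicIndex {V : Type*} [Fintype V] (G : SimpleGraph V) : ℝ :=
  ∑ e ∈ G.edgeFinset,
    Sym2.lift ⟨fun u v => 2 / ((G.degree u : ℝ) + (G.degree v : ℝ)),
      fun u v => by simp [add_comm]⟩ e

/-!
In the total graph `T(G)` a vertex `v` has degree `2 deg v` (its neighbours and its incident
edges), and an edge `uv` has degree `deg u + deg v` (its two ends, and the `deg u - 1` and
`deg v - 1` other edges at `u` and at `v`). Hence `T(G)` is `2r`-regular when `G` is
`r`-regular. In an `r`-regular graph with `r > 0` every edge contributes `1 / r` to the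
harmonic index and there are `r |V| / 2` edges, so `H = |V| / 2`. Since `T(C_n)` is
`4`-regular on `n + n` vertices, `H(T(C_n)) = n`.
-/

namespace SimpleGraph

open Finset

variable {V : Type*}

theorem IsRegularOfDegree.two_mul_card_edgeFinset [Fintype V] {G : SimpleGraph V}
    [DecidableRel G.Adj] {r : ℕ} (h : G.IsRegularOfDegree r) :
    2 * #G.edgeFinset = r * Fintype.card V := by
  rw [← sum_degrees_eq_twice_card_edges, sum_congr rfl fun v _ => h.degree_eq v]
  simp [mul_comm]

theorem degree_eq_card_filter_inl_add_card_filter_inr {α β : Type*} [Fintype α] [Fintype β]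
    (H : SimpleGraph (α ⊕ β)) [DecidableRel H.Adj] (x : α ⊕ β) :
    H.degree x = #{a | H.Adj x (.inl a)} + #{b | H.Adj x (.inr b)} := by
  simp only [← card_neighborFinset_eq_degree, neighborFinset_eq_filter, card_filter,
    Fintype.sum_sum_type]

theorem card_filter_edgeSet (G : SimpleGraph V) [Fintype G.edgeSet] (p : Sym2 V → Prop)
    [DecidablePred p] : #{e : G.edgeSet | p e} = #{e ∈ G.edgeFinset | p e} := by
  rw [← card_map (Function.Embedding.subtype _)]
  congr 1
  ext e
  simp [and_comm]

section Total

variable (G : SimpleGraph V)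

@[simp] theorem totalGraph_adj_inl_inl (u v : V) :
    G.totalGraph.Adj (.inl u) (.inl v) ↔ G.Adj u v := .rfl

@[simp] theorem totalGraph_adj_inl_inr (u : V) (e : G.edgeSet) :
    G.totalGraph.Adj (.inl u) (.inr e) ↔ u ∈ (e : Sym2 V) := .rfl

@[simp] theorem totalGraph_adj_inr_inl (e : G.edgeSet) (u : V) :
    G.totalGraph.Adj (.inr e) (.inl u) ↔ u ∈ (e : Sym2 V) := .rfl

@[simp] theorem totalGraph_adj_inr_inr (e f : G.edgeSet) :
    G.totalGraph.Adj (.inr e) (.inr f) ↔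
      e ≠ f ∧ ∃ v, v ∈ (e : Sym2 V) ∧ v ∈ (f : Sym2 V) :=
  .rfl

variable [Fintype V] [DecidableRel G.Adj] [Fintype G.edgeSet]

theorem degree_totalGraph_inl (v : V) : G.totalGraph.degree (.inl v) = 2 * G.degree v := by
  rw [degree_eq_card_filter_inl_add_card_filter_inr]
  simp only [totalGraph_adj_inl_inl, totalGraph_adj_inl_inr]
  rw [card_filter_edgeSet G (v ∈ ·), ← incidenceFinset_eq_filter,
    card_incidenceFinset_eq_degree, ← neighborFinset_eq_filter, card_neighborFinset_eq_degree,
    two_mul]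

theorem degree_totalGraph_inr {u v : V} (h : G.Adj u v) :
    G.totalGraph.degree (.inr ⟨s(u, v), h⟩) = G.degree u + G.degree v := by
  rw [degree_eq_card_filter_inl_add_card_filter_inr]
  have hends : #{w | G.totalGraph.Adj (.inr ⟨s(u, v), h⟩) (.inl w)} = 2 := by
    simp only [totalGraph_adj_inr_inl]
    rw [show ({w | w ∈ s(u, v)} : Finset V) = {u, v} by ext; simp, card_pair h.ne]
  -- The other edges meeting `s(u, v)` are those at `u` or at `v`, and `s(u, v)` is the only
  -- edge at both.
  have hnbrs : #{f | G.totalGraph.Adj (.inr ⟨s(u, v), h⟩) (.inr f)} =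
      #((G.incidenceFinset u ∪ G.incidenceFinset v).erase s(u, v)) := by
    rw [← card_map (.subtype _)]
    congr 1
    ext f
    simp only [mem_map, mem_filter, mem_univ, true_and, Function.Embedding.subtype_apply,
      Subtype.exists, exists_and_right, exists_eq_right, totalGraph_adj_inr_inr, ne_eq,
      Subtype.ext_iff, mem_erase, mem_union, mem_incidenceFinset, incidenceSet, Set.mem_ofPred_eq]
    grind
  have hinter : G.incidenceFinset u ∩ G.incidenceFinset v = {s(u, v)} := by
    rw [← coe_inj]
    push_cast
    exact G.incidenceSet_inter_incidenceSet_of_adj h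
  have hunion := card_union_add_card_inter (G.incidenceFinset u) (G.incidenceFinset v)
  rw [hinter, card_singleton, card_incidenceFinset_eq_degree,
    card_incidenceFinset_eq_degree] at hunion
  have hmem : s(u, v) ∈ G.incidenceFinset u ∪ G.incidenceFinset v := by
    simp [G.mk'_mem_incidenceSet_left_iff, h]
  have := card_pos.mpr ⟨_, hmem⟩
  rw [hends, hnbrs, card_erase_of_mem hmem]
  omega

variable {G} in
theorem IsRegularOfDegree.totalGraph {r : ℕ} (h : G.IsRegularOfDegree r) :
    G.totalGraph.IsRegularOfDegree (2 * r) := by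
  rintro (v | ⟨e, he⟩)
  · rw [degree_totalGraph_inl, h.degree_eq]
  · induction e using Sym2.ind with
    | _ u v => rw [degree_totalGraph_inr G he, h.degree_eq, h.degree_eq, two_mul]

end Total

theorem IsRegularOfDegree.harmonicIndex_eq [Fintype V] {G : SimpleGraph V} {r : ℕ}
    (h : G.IsRegularOfDegree r) (hr : r ≠ 0) : G.harmonicIndex = Fintype.card V / 2 := by
  have hcard : (2 * #G.edgeFinset : ℝ) = r * Fintype.card V := by
    exact_mod_cast h.two_mul_card_edgeFinset
  calc G.harmonicIndex = ∑ _e ∈ G.edgeFinset, (1 / r : ℝ) := by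
        refine sum_congr rfl fun e _ => ?_
        induction e using Sym2.ind with
        | _ u v =>
          simp only [Sym2.lift_mk, h.degree_eq]
          field_simp
          ring
    _ = Fintype.card V / 2 := by
        rw [sum_const, nsmul_eq_mul]
        field_simp
        linarith

theorem cycleGraph_isRegularOfDegree_two {n : ℕ} (hn : 3 ≤ n) :
    (cycleGraph n).IsRegularOfDegree 2 := by
  obtain ⟨m, rfl⟩ := Nat.exists_eq_add_of_le' hn
  exact fun _ => cycleGraph_degree_three_le

theorem card_edgeSet_cycleGraph {n : ℕ} (hn : 3 ≤ n) :
    Fintype.card (cycleGraph n).edgeSet = n := by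
  have := (cycleGraph_isRegularOfDegree_two hn).two_mul_card_edgeFinset
  rw [edgeFinset_card, Fintype.card_fin] at this
  omega

end SimpleGraph

/-- For the cycle graph `C_n` on `n ≥ 3` vertices, `H(T(C_n)) = n`. -/
theorem harmonicIndex_totalGraph_cycleGraph (n : ℕ) (hn : 3 ≤ n) :
    (SimpleGraph.cycleGraph n).totalGraph.harmonicIndex = (n : ℝ) := by
  rw [(SimpleGraph.cycleGraph_isRegularOfDegree_two hn).totalGraph.harmonicIndex_eq (by norm_num),
    Fintype.card_sum, Fintype.card_fin, SimpleGraph.card_edgeSet_cycleGraph hn]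
  push_cast
  ring
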